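/- Let 1 ≤ p < q ≤ ∞, put α = 1/p − 1/q (with the convention 1/∞ = 0). There is a positive integer C₆, depending only on p and q, with the following property: for all m, n ∈ ℕ with 2 ≤ n ≤ m ≤ 2ⁿ, all Banach spaces X, Y, every bounded linear operator T₀ from X to Y and every s ∈ ℕ, one has e_{C₆·n + s}(T(m)) ≤ 2^{1/q}·max( e_s(T(k)), ‖T₀‖/(k+1)^α ), where k is the smallest positive integer with k ≥ n/(2·log₂(2m/n)), and for j ∈ ℕ, T(j) : ℓ_p^j(X) → ℓ_q^j(Y) denotes the diagonal operator T(j)(x₁, …, x_j) = (T₀(x₁), …, T₀(x_j)). -/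

import Mathlib

open Metric Set
open scoped ENNReal

/-- The `n`-th (dyadic) entropy number of a bounded linear operator `T : X → Y`:
the infimum of all `ε > 0` such that the image of the closed unit ball of `X`
can be covered by `2 ^ (n - 1)` closed balls of radius `ε` in `Y`. -/
noncomputable def entropyNum {X Y : Type*} [NormedAddCommGroup X] [NormedSpace ℝ X]
    [NormedAddCommGroup Y] [NormedSpace ℝ Y] (n : ℕ) (T : X →L[ℝ] Y) : ℝ :=
  sInf {ε : ℝ | 0 < ε ∧ ∃ S : Finset Y, S.card ≤ 2 ^ (n - 1) ∧
    T '' closedBall 0 1 ⊆ ⋃ y ∈ S, closedBall y ε}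

/-- The `n`-th (dyadic) inner entropy number of a bounded linear operator `T : X → Y`:
the supremum of all `ε > 0` such that there are `2 ^ (n - 1) + 1` points in the closed
unit ball of `X` whose images under `T` are pairwise at distance at least `2 * ε`. -/
noncomputable def innerEntropyNum {X Y : Type*} [NormedAddCommGroup X] [NormedSpace ℝ X]
    [NormedAddCommGroup Y] [NormedSpace ℝ Y] (n : ℕ) (T : X →L[ℝ] Y) : ℝ :=
  sSup {ε : ℝ | 0 < ε ∧ ∃ x : Fin (2 ^ (n - 1) + 1) → X, (∀ i, ‖x i‖ ≤ 1) ∧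
    ∀ i j, i ≠ j → 2 * ε ≤ ‖T (x i) - T (x j)‖}

/-!
Fix `x` in the unit ball of `ℓ_p^m`. By Markov's inequality at most `k` coordinates have
`‖x_i‖^p > 1/(k+1)`, so they all lie in some `k`-subset `A`. On `A`, `T(m) x` is `T(k)` applied
to the restriction of `x`, which lies within `ε` of one of the centres covering `T(k)(B)`.
Off `A`, the bound `‖x_i‖^p ≤ 1/(k+1)` together with `∑ ‖x_i‖^p ≤ 1` gives
`‖(T₀ x_i)_{i ∉ A}‖_q ≤ ‖T₀‖ / (k+1)^α`. The two pieces have disjoint supports, so the `ℓ_q`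
norm of their sum is at most `2^{1/q}` times the larger one. Ranging over all `C(m,k)` subsets
covers `T(m)(B)` with `C(m,k) · 2^{s-1}` balls, and the choice of `k` makes
`C(m,k) ≤ (3m/k)^k ≤ 2^{5n}`.
-/

open Function WithLp

lemma Nat.choose_le_three_mul_div_pow (m k : ℕ) : (m.choose k : ℝ) ≤ (3 * m / k) ^ k := by
  rcases k.eq_zero_or_pos with rfl | hk
  · simp
  have hk' : (0 : ℝ) < k := by exact_mod_cast hk
  have hfact : (k : ℝ) ^ k ≤ 3 ^ k * k.factorial := by
    have hexp : Real.exp k ≤ 3 ^ k := by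
      rw [← Real.exp_one_rpow, Real.rpow_natCast]
      gcongr
      linarith [Real.exp_one_lt_d9]
    have := (Real.pow_div_factorial_le_exp (k : ℝ) hk'.le k).trans hexp
    rwa [div_le_iff₀ (by positivity)] at this
  calc (m.choose k : ℝ) ≤ (m : ℝ) ^ k / k.factorial := Nat.choose_le_pow_div k m
    _ ≤ (3 * m / k) ^ k := by
        rw [div_pow, mul_pow, div_le_div_iff₀ (by positivity) (by positivity)]
        calc (m : ℝ) ^ k * k ^ k ≤ m ^ k * (3 ^ k * k.factorial) := by gcongr
          _ = 3 ^ k * m ^ k * k.factorial := by ring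

lemma natCast_le_add_one_of_forall_le {a : ℝ} (ha : 0 < a) {k : ℕ}
    (hk : ∀ j : ℕ, 1 ≤ j → a ≤ j → k ≤ j) : (k : ℝ) ≤ a + 1 :=
  calc (k : ℝ) ≤ ⌈a⌉₊ := by exact_mod_cast hk _ (Nat.one_le_ceil_iff.2 ha) (Nat.le_ceil a)
    _ ≤ a + 1 := (Nat.ceil_lt_add_one ha.le).le

lemma logb_two_mul_div_mem_Icc {m n : ℕ} (hn : 2 ≤ n) (hnm : n ≤ m) (hm : m ≤ 2 ^ n) :
    Real.logb 2 (2 * m / n) ∈ Set.Icc 1 (n : ℝ) := by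
  have hn2 : (2 : ℝ) ≤ n := by exact_mod_cast hn
  have hnm' : (n : ℝ) ≤ m := by exact_mod_cast hnm
  have hm' : (m : ℝ) ≤ 2 ^ n := by exact_mod_cast hm
  have hx : (0 : ℝ) < 2 * m / n := div_pos (by linarith) (by linarith)
  constructor
  · rw [Real.le_logb_iff_rpow_le one_lt_two hx, Real.rpow_one, le_div_iff₀ (by positivity)]
    linarith
  · rw [Real.logb_le_iff_le_rpow one_lt_two hx, Real.rpow_natCast, div_le_iff₀ (by positivity)]
    nlinarith [pow_pos (two_pos : (0 : ℝ) < 2) n]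

lemma three_mul_div_le_two_rpow {m n k L : ℝ} (hL : 1 ≤ L) (hn : 0 < n) (hk : 0 < k)
    (h2L : 2 ^ L = 2 * m / n) (hnk : n ≤ 2 * L * k) : 3 * m / k ≤ 2 ^ (3 * L) := by
  have hbernoulli : 3 * L ≤ (2 : ℝ) ^ (2 * L) := by
    have := one_add_mul_self_le_rpow_one_add (s := 3) (by norm_num) hL
    rw [Real.rpow_mul two_pos.le]
    norm_num at this ⊢
    linarith
  calc 3 * m / k = 3 * (2 * m / n) * (n / (2 * k)) := by field_simp
    _ ≤ 3 * 2 ^ L * L := by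
        rw [← h2L]
        gcongr
        rw [div_le_iff₀ (by positivity)]
        linarith
    _ = 2 ^ L * (3 * L) := by ring
    _ ≤ 2 ^ L * 2 ^ (2 * L) := by gcongr
    _ = 2 ^ (3 * L) := by rw [← Real.rpow_add two_pos]; ring_nf

lemma choose_le_two_pow_of_minimal {m n k : ℕ} (hn : 2 ≤ n) (hnm : n ≤ m) (hm : m ≤ 2 ^ n)
    (hk_ge : (n : ℝ) / (2 * Real.logb 2 (2 * m / n)) ≤ k)
    (hk_min : ∀ j : ℕ, 1 ≤ j → (n : ℝ) / (2 * Real.logb 2 (2 * m / n)) ≤ j → k ≤ j) :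
    k ≤ n ∧ m.choose k ≤ 2 ^ (5 * n) := by
  obtain ⟨hL1, hLn⟩ := logb_two_mul_div_mem_Icc hn hnm hm
  set L := Real.logb 2 (2 * m / n)
  have hn2 : (2 : ℝ) ≤ n := by exact_mod_cast hn
  have hm0 : (0 : ℝ) < m := by exact_mod_cast (show 0 < m by omega)
  have ha : 0 < (n : ℝ) / (2 * L) := div_pos (by linarith) (by linarith)
  have hk_pos : (0 : ℝ) < k := ha.trans_le hk_ge
  have hk_le := natCast_le_add_one_of_forall_le ha hk_min
  have hn_le : (n : ℝ) / (2 * L) ≤ n / 2 := by gcongr; linarith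
  have hkL : L * k ≤ 3 * n / 2 := by
    calc L * k ≤ L * ((n : ℝ) / (2 * L) + 1) := by gcongr
      _ = n / 2 + L := by field_simp
      _ ≤ 3 * n / 2 := by linarith
  have hratio : 3 * (m : ℝ) / k ≤ 2 ^ (3 * L) := by
    refine three_mul_div_le_two_rpow hL1 (by linarith) hk_pos
      (Real.rpow_logb two_pos (by norm_num) (div_pos (by linarith) (by linarith))) ?_
    rw [div_le_iff₀ (by linarith)] at hk_ge
    linarith
  have hchoose : (m.choose k : ℝ) ≤ 2 ^ (5 * n) := by
    calc (m.choose k : ℝ) ≤ (3 * m / k) ^ k := Nat.choose_le_three_mul_div_pow m k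
      _ ≤ ((2 : ℝ) ^ (3 * L)) ^ k := by gcongr
      _ = 2 ^ (3 * L * k) := by rw [← Real.rpow_mul_natCast two_pos.le]
      _ ≤ 2 ^ ((5 * n : ℕ) : ℝ) :=
          Real.rpow_le_rpow_of_exponent_le one_le_two (by push_cast; linarith)
      _ = 2 ^ (5 * n) := Real.rpow_natCast _ _
  exact ⟨by exact_mod_cast (show (k : ℝ) ≤ n by linarith), by exact_mod_cast hchoose⟩

lemma Finset.card_filter_inv_lt_le {ι : Type*} (s : Finset ι) {f : ι → ℝ}
    (hf : ∀ i ∈ s, 0 ≤ f i) (hsum : ∑ i ∈ s, f i ≤ 1) (k : ℕ) :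
    (s.filter fun i ↦ ((k : ℝ) + 1)⁻¹ < f i).card ≤ k := by
  set B := s.filter fun i ↦ ((k : ℝ) + 1)⁻¹ < f i
  rcases B.eq_empty_or_nonempty with hB | hB
  · simp [hB]
  have hlt : (B.card : ℝ) * ((k : ℝ) + 1)⁻¹ < 1 := by
    calc (B.card : ℝ) * ((k : ℝ) + 1)⁻¹ = ∑ _i ∈ B, ((k : ℝ) + 1)⁻¹ := by simp
      _ < ∑ i ∈ B, f i := Finset.sum_lt_sum_of_nonempty hB fun i hi ↦ (Finset.mem_filter.1 hi).2
      _ ≤ ∑ i ∈ s, f i :=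
          Finset.sum_le_sum_of_subset_of_nonneg (Finset.filter_subset _ _) fun i hi _ ↦ hf i hi
      _ ≤ 1 := hsum
  rw [← div_eq_mul_inv, div_lt_one (by positivity)] at hlt
  exact_mod_cast Nat.lt_succ_iff.mp (by exact_mod_cast hlt)

namespace PiLp

variable {ι κ : Type*} [Fintype ι] [Fintype κ] {p : ℝ≥0∞}

lemma norm_rpow_eq_sum {β : ι → Type*} [∀ i, NormedAddCommGroup (β i)] (hp : 0 < p.toReal)
    (x : PiLp p β) : ‖x‖ ^ p.toReal = ∑ i, ‖x i‖ ^ p.toReal := by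
  rw [norm_eq_sum hp, ← Real.rpow_mul (by positivity), one_div_mul_cancel hp.ne', Real.rpow_one]

variable [Fact (1 ≤ p)]

lemma norm_le_norm_of_forall_le {β γ : ι → Type*} [∀ i, NormedAddCommGroup (β i)]
    [∀ i, NormedAddCommGroup (γ i)] {x : PiLp p β} {y : PiLp p γ} (h : ∀ i, ‖x i‖ ≤ ‖y i‖) :
    ‖x‖ ≤ ‖y‖ := by
  have := lp.norm_mono (zero_lt_one.trans_le Fact.out).ne' (x := Equiv.lpPiLp.symm x)
    (y := Equiv.lpPiLp.symm y) h
  rwa [← equiv_lpPiLp_norm, ← equiv_lpPiLp_norm, Equiv.apply_symm_apply,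
    Equiv.apply_symm_apply] at this

variable {E : Type*} [NormedAddCommGroup E]

lemma norm_toLp_extend_zero {σ : κ → ι} (hσ : Injective σ) (g : PiLp p (fun _ : κ ↦ E)) :
    ‖toLp p (extend σ (ofLp g) 0)‖ = ‖g‖ := by
  rcases p.dichotomy with rfl | hp
  · refine le_antisymm (Real.iSup_le (fun i ↦ ?_) (norm_nonneg _))
      (Real.iSup_le (fun j ↦ ?_) (norm_nonneg _))
    · by_cases hi : ∃ j, σ j = i
      · obtain ⟨j, rfl⟩ := hi
        simpa [hσ.extend_apply] using norm_apply_le g j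
      · simp [extend_apply' _ _ _ hi]
    · simpa [hσ.extend_apply] using norm_apply_le (toLp ∞ (extend σ (ofLp g) 0)) (σ j)
  · have hp0 : 0 < p.toReal := zero_lt_one.trans_le hp
    have hsum : ∑ i, ‖extend σ (ofLp g) 0 i‖ ^ p.toReal = ∑ j, ‖g j‖ ^ p.toReal := by
      have hF (i : ι) : ‖extend σ (ofLp g) 0 i‖ ^ p.toReal
          = extend σ (fun j ↦ ‖g j‖ ^ p.toReal) 0 i := by
        rw [apply_extend (fun y : E ↦ ‖y‖ ^ p.toReal)]
        simp [comp_def, Real.zero_rpow hp0.ne']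
        rfl
      simp only [hF]
      exact (tsum_fintype _).symm.trans ((tsum_extend_zero hσ _).trans (tsum_fintype _))
    rw [norm_eq_sum hp0, norm_eq_sum hp0]
    simp only [hsum]

lemma norm_add_le_of_disjoint {u v : PiLp p (fun _ : ι ↦ E)} (huv : ∀ i, u i = 0 ∨ v i = 0) :
    ‖u + v‖ ≤ 2 ^ (1 / p.toReal) * max ‖u‖ ‖v‖ := by
  have hcoord (i : ι) : ‖u i + v i‖ ≤ max ‖u‖ ‖v‖ := by
    rcases huv i with h | h
    · simpa [h] using le_max_of_le_right (norm_apply_le v i)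
    · simpa [h] using le_max_of_le_left (norm_apply_le u i)
  rcases p.dichotomy with rfl | hp
  · calc ‖u + v‖ ≤ max ‖u‖ ‖v‖ := Real.iSup_le hcoord (by positivity)
      _ = _ := by simp
  · have hr : 0 < p.toReal := zero_lt_one.trans_le hp
    have hsplit : ‖u + v‖ ^ p.toReal = ‖u‖ ^ p.toReal + ‖v‖ ^ p.toReal := by
      simp only [norm_rpow_eq_sum hr, add_apply, ← Finset.sum_add_distrib]
      refine Finset.sum_congr rfl fun i _ ↦ ?_
      rcases huv i with h | h <;> simp [h, Real.zero_rpow hr.ne']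
    have hM : ‖u + v‖ ^ p.toReal ≤ 2 * max ‖u‖ ‖v‖ ^ p.toReal := by
      rw [hsplit, two_mul]
      gcongr <;> simp
    calc ‖u + v‖ = (‖u + v‖ ^ p.toReal) ^ (1 / p.toReal) := by
          rw [← Real.rpow_mul (norm_nonneg _), mul_one_div_cancel hr.ne', Real.rpow_one]
      _ ≤ (2 * max ‖u‖ ‖v‖ ^ p.toReal) ^ (1 / p.toReal) := by gcongr
      _ = 2 ^ (1 / p.toReal) * max ‖u‖ ‖v‖ := by
          rw [Real.mul_rpow (by norm_num) (by positivity), ← Real.rpow_mul (by positivity),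
            mul_one_div_cancel hr.ne', Real.rpow_one]

lemma norm_toLp_comp_le {σ : κ → ι} (hσ : Injective σ) (x : PiLp p (fun _ : ι ↦ E)) :
    ‖toLp p fun j ↦ x (σ j)‖ ≤ ‖x‖ := by
  rw [← norm_toLp_extend_zero hσ (toLp p fun j ↦ x (σ j))]
  refine norm_le_norm_of_forall_le fun i ↦ ?_
  by_cases hi : ∃ j, σ j = i
  · obtain ⟨j, rfl⟩ := hi
    simp [hσ.extend_apply]
  · simp [extend_apply' _ _ _ hi]

lemma norm_toLp_le_rpow_of_norm_rpow_le {q : ℝ≥0∞} [Fact (1 ≤ q)] (hpq : p ≤ q) (hp : p ≠ ∞)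
    {x : PiLp p (fun _ : ι ↦ E)} (hx : ‖x‖ ≤ 1) {t : ℝ} (ht0 : 0 ≤ t)
    (ht : ∀ i, ‖x i‖ ^ p.toReal ≤ t) :
    ‖toLp q (ofLp x)‖ ≤ t ^ (1 / p.toReal - 1 / q.toReal) := by
  have hr : 0 < p.toReal := p.toReal_pos_iff_ne_top.2 hp
  have hxi (i : ι) : ‖x i‖ ≤ t ^ (1 / p.toReal) := by
    calc ‖x i‖ = (‖x i‖ ^ p.toReal) ^ (1 / p.toReal) := by
          rw [one_div, Real.rpow_rpow_inv (norm_nonneg _) hr.ne']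
      _ ≤ t ^ (1 / p.toReal) := by gcongr; exact ht i
  rcases q.dichotomy with rfl | hq
  · calc ‖toLp ∞ (ofLp x)‖ ≤ t ^ (1 / p.toReal) := Real.iSup_le hxi (by positivity)
      _ = _ := by simp
  have hs : 0 < q.toReal := zero_lt_one.trans_le hq
  have hrs : p.toReal ≤ q.toReal := ENNReal.toReal_mono (by rintro rfl; norm_num at hq) hpq
  have hsum : ∑ i, ‖x i‖ ^ q.toReal ≤ (t ^ (1 / p.toReal)) ^ (q.toReal - p.toReal) := by
    calc ∑ i, ‖x i‖ ^ q.toReal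
        = ∑ i, ‖x i‖ ^ (q.toReal - p.toReal) * ‖x i‖ ^ p.toReal := by
          refine Finset.sum_congr rfl fun i _ ↦ ?_
          rw [← Real.rpow_add_of_nonneg (norm_nonneg _) (by linarith) hr.le, sub_add_cancel]
      _ ≤ ∑ i, (t ^ (1 / p.toReal)) ^ (q.toReal - p.toReal) * ‖x i‖ ^ p.toReal := by
          gcongr with i
          exact hxi i
      _ = (t ^ (1 / p.toReal)) ^ (q.toReal - p.toReal) * ‖x‖ ^ p.toReal := by
          rw [← Finset.mul_sum, norm_rpow_eq_sum hr]
      _ ≤ (t ^ (1 / p.toReal)) ^ (q.toReal - p.toReal) := by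
          refine mul_le_of_le_one_right (by positivity) ?_
          exact Real.rpow_le_one (norm_nonneg _) hx hr.le
  calc ‖toLp q (ofLp x)‖ = (∑ i, ‖x i‖ ^ q.toReal) ^ (1 / q.toReal) := norm_eq_sum hs _
    _ ≤ ((t ^ (1 / p.toReal)) ^ (q.toReal - p.toReal)) ^ (1 / q.toReal) := by gcongr
    _ = t ^ (1 / p.toReal - 1 / q.toReal) := by
        rw [← Real.rpow_mul ht0, ← Real.rpow_mul ht0]
        congr 1
        field_simp

lemma exists_card_eq_forall_notMem_norm_rpow_le (hp : p ≠ ∞)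
    {x : PiLp p (fun _ : ι ↦ E)} (hx : ‖x‖ ≤ 1) {k : ℕ} (hk : k ≤ Fintype.card ι) :
    ∃ A : Finset ι, A.card = k ∧ ∀ i ∉ A, ‖x i‖ ^ p.toReal ≤ ((k : ℝ) + 1)⁻¹ := by
  have hr : 0 < p.toReal := p.toReal_pos_iff_ne_top.2 hp
  have hsum : ∑ i, ‖x i‖ ^ p.toReal ≤ 1 := by
    rw [← norm_rpow_eq_sum hr]
    exact Real.rpow_le_one (norm_nonneg _) hx hr.le
  obtain ⟨A, hBA, -, hA⟩ := Finset.exists_subsuperset_card_eq (Finset.subset_univ _)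
    (Finset.univ.card_filter_inv_lt_le (fun i _ ↦ by positivity) hsum k)
    (by rwa [Finset.card_univ])
  refine ⟨A, hA, fun i hi ↦ ?_⟩
  by_contra! h
  exact hi (hBA (Finset.mem_filter.2 ⟨Finset.mem_univ _, h⟩))

end PiLp

section EntropyNumbers

variable {X Y X' Y' : Type*} [NormedAddCommGroup X] [NormedSpace ℝ X] [NormedAddCommGroup Y]
  [NormedSpace ℝ Y] [NormedAddCommGroup X'] [NormedSpace ℝ X'] [NormedAddCommGroup Y']
  [NormedSpace ℝ Y']

lemma entropyNum_le_of_cover {n : ℕ} {T : X →L[ℝ] Y} {ε : ℝ} (hε : 0 < ε) (S : Finset Y)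
    (hS : S.card ≤ 2 ^ (n - 1)) (hcov : T '' closedBall 0 1 ⊆ ⋃ y ∈ S, closedBall y ε) :
    entropyNum n T ≤ ε :=
  csInf_le ⟨0, fun _ h ↦ h.1.le⟩ ⟨hε, S, hS, hcov⟩

lemma le_entropyNum_of_forall_cover {n : ℕ} {T : X →L[ℝ] Y} {a : ℝ}
    (h : ∀ ε > 0, ∀ S : Finset Y, S.card ≤ 2 ^ (n - 1) →
      T '' closedBall 0 1 ⊆ ⋃ y ∈ S, closedBall y ε → a ≤ ε) :
    a ≤ entropyNum n T := by
  refine le_csInf ⟨‖T‖ + 1, by positivity, {0}, by simp [Nat.one_le_two_pow], ?_⟩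
    fun ε ⟨hε, S, hS, hcov⟩ ↦ h ε hε S hS hcov
  rintro _ ⟨x, hx, rfl⟩
  rw [mem_closedBall_zero_iff] at hx
  simp only [Finset.mem_singleton, iUnion_iUnion_eq_left, mem_closedBall_zero_iff]
  calc ‖T x‖ ≤ ‖T‖ * ‖x‖ := T.le_opNorm x
    _ ≤ ‖T‖ * 1 := by gcongr
    _ ≤ ‖T‖ + 1 := by linarith

lemma entropyNum_le_mul_max_of_forall_cover {n s : ℕ} {T : X →L[ℝ] Y} {T' : X' →L[ℝ] Y'}
    {c D : ℝ} (hc : 0 < c)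
    (h : ∀ ε > 0, ∀ S : Finset Y', S.card ≤ 2 ^ (s - 1) →
      T' '' closedBall 0 1 ⊆ ⋃ y ∈ S, closedBall y ε → entropyNum n T ≤ c * max ε D) :
    entropyNum n T ≤ c * max (entropyNum s T') D := by
  by_cases hD : entropyNum n T ≤ c * D
  · exact hD.trans (by gcongr; exact le_max_right _ _)
  push Not at hD
  -- once `e_n(T) > c D`, every admissible radius `ε` of `T'` satisfies `e_n(T) ≤ c ε`
  have hle : entropyNum n T / c ≤ entropyNum s T' := by
    refine le_entropyNum_of_forall_cover fun ε hε S hS hcov ↦ ?_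
    have hmax := h ε hε S hS hcov
    rw [div_le_iff₀' hc]
    rcases le_total ε D with hεD | hDε
    · rw [max_eq_right hεD] at hmax
      linarith
    · rwa [max_eq_left hDε] at hmax
  calc entropyNum n T = c * (entropyNum n T / c) := by field_simp
    _ ≤ c * max (entropyNum s T') D := by gcongr; exact le_max_of_le_left hle

end EntropyNumbers

section Diagonal

open PiLp

variable {X Y : Type*} [NormedAddCommGroup X] [NormedSpace ℝ X] [NormedAddCommGroup Y]
  [NormedSpace ℝ Y] {p q : ℝ≥0∞} [Fact (1 ≤ p)] [Fact (1 ≤ q)] {m k : ℕ} {T₀ : X →L[ℝ] Y}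
  {Tm : PiLp p (fun _ : Fin m ↦ X) →L[ℝ] PiLp q (fun _ : Fin m ↦ Y)}
  {Tk : PiLp p (fun _ : Fin k ↦ X) →L[ℝ] PiLp q (fun _ : Fin k ↦ Y)}

lemma norm_diagonal_le_of_norm_rpow_le {ι : Type*} [Fintype ι] (hpq : p ≤ q) (hp : p ≠ ∞)
    {T : PiLp p (fun _ : ι ↦ X) →L[ℝ] PiLp q (fun _ : ι ↦ Y)} (hT : ∀ x i, T x i = T₀ (x i))
    {x : PiLp p (fun _ : ι ↦ X)} (hx : ‖x‖ ≤ 1) {t : ℝ} (ht0 : 0 ≤ t)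
    (ht : ∀ i, ‖x i‖ ^ p.toReal ≤ t) :
    ‖T x‖ ≤ ‖T₀‖ * t ^ (1 / p.toReal - 1 / q.toReal) :=
  calc ‖T x‖ ≤ ‖‖T₀‖ • toLp q (ofLp x)‖ :=
        norm_le_norm_of_forall_le fun i ↦ by simpa [hT, norm_smul] using T₀.le_opNorm (x i)
    _ = ‖T₀‖ * ‖toLp q (ofLp x)‖ := by rw [norm_smul, norm_norm]
    _ ≤ ‖T₀‖ * t ^ (1 / p.toReal - 1 / q.toReal) := by
        gcongr
        exact norm_toLp_le_rpow_of_norm_rpow_le hpq hp hx ht0 ht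

lemma norm_diagonal_sub_toLp_extend_le (hpq : p ≤ q) (hp : p ≠ ∞)
    (hTm : ∀ x i, Tm x i = T₀ (x i)) (hTk : ∀ x i, Tk x i = T₀ (x i))
    {x : PiLp p (fun _ : Fin m ↦ X)} (hx : ‖x‖ ≤ 1) {A : Finset (Fin m)} (hA : A.card = k)
    (hxA : ∀ i ∉ A, ‖x i‖ ^ p.toReal ≤ ((k : ℝ) + 1)⁻¹) {c : PiLp q (fun _ : Fin k ↦ Y)} {ε : ℝ}
    (hc : ‖Tk (toLp p fun j ↦ x (A.orderEmbOfFin hA j)) - c‖ ≤ ε) :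
    ‖Tm x - toLp q (extend (A.orderEmbOfFin hA) (ofLp c) 0)‖ ≤
      2 ^ (1 / q.toReal) * max ε (‖T₀‖ / ((k : ℝ) + 1) ^ (1 / p.toReal - 1 / q.toReal)) := by
  set σ := A.orderEmbOfFin hA
  have hmem (i : Fin m) : i ∈ A ↔ ∃ j, σ j = i := by
    rw [← Finset.mem_coe, ← A.range_orderEmbOfFin hA, Set.mem_range]
  set tail : PiLp p (fun _ : Fin m ↦ X) := toLp p fun i ↦ if i ∈ A then 0 else x i
  have hdecomp : Tm x - toLp q (extend σ (ofLp c) 0) =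
      toLp q (extend σ (ofLp (Tk (toLp p fun j ↦ x (σ j)) - c)) 0) + Tm tail := by
    ext i
    by_cases hi : i ∈ A
    · obtain ⟨j, rfl⟩ := (hmem i).1 hi
      simp [hTm, hTk, σ.injective.extend_apply, tail, hi]
    · have hi' : ¬∃ j, σ j = i := mt (hmem i).2 hi
      simp [hTm, extend_apply' _ _ _ hi', tail, hi]
  have hdisj (i : Fin m) :
      toLp q (extend σ (ofLp (Tk (toLp p fun j ↦ x (σ j)) - c)) 0) i = 0 ∨ Tm tail i = 0 := by
    by_cases hi : i ∈ A
    · simp [hTm, tail, hi]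
    · simp [extend_apply' _ _ _ (mt (hmem i).2 hi)]
  have htail : ‖Tm tail‖ ≤ ‖T₀‖ / ((k : ℝ) + 1) ^ (1 / p.toReal - 1 / q.toReal) := by
    have htail_norm : ‖tail‖ ≤ 1 := by
      refine (norm_le_norm_of_forall_le fun i ↦ ?_).trans hx
      by_cases hi : i ∈ A <;> simp [tail, hi]
    have htail_small (i : Fin m) : ‖tail i‖ ^ p.toReal ≤ ((k : ℝ) + 1)⁻¹ := by
      by_cases hi : i ∈ A
      · simp [tail, hi, Real.zero_rpow (p.toReal_pos_iff_ne_top.2 hp).ne']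
        positivity
      · simpa [tail, hi] using hxA i hi
    calc ‖Tm tail‖ ≤ ‖T₀‖ * ((k : ℝ) + 1)⁻¹ ^ (1 / p.toReal - 1 / q.toReal) :=
          norm_diagonal_le_of_norm_rpow_le hpq hp hTm htail_norm (by positivity) htail_small
      _ = _ := by rw [Real.inv_rpow (by positivity), ← div_eq_mul_inv]
  rw [hdecomp]
  refine (norm_add_le_of_disjoint hdisj).trans (mul_le_mul_of_nonneg_left ?_ (by positivity))
  exact max_le_max (by rwa [norm_toLp_extend_zero σ.injective]) htail

theorem exists_finset_cover_diagonal (hpq : p < q) (hkm : k ≤ m)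
    (hTm : ∀ x i, Tm x i = T₀ (x i)) (hTk : ∀ x i, Tk x i = T₀ (x i)) {ε : ℝ}
    {F : Finset (PiLp q (fun _ : Fin k ↦ Y))}
    (hF : Tk '' closedBall 0 1 ⊆ ⋃ c ∈ F, closedBall c ε) :
    ∃ G : Finset (PiLp q (fun _ : Fin m ↦ Y)), G.card ≤ m.choose k * F.card ∧
      Tm '' closedBall 0 1 ⊆ ⋃ c ∈ G, closedBall c
        (2 ^ (1 / q.toReal) * max ε (‖T₀‖ / ((k : ℝ) + 1) ^ (1 / p.toReal - 1 / q.toReal))) := by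
  classical
  refine ⟨Finset.univ.biUnion fun A : {A : Finset (Fin m) // A.card = k} ↦
    F.image fun c ↦ toLp q (extend (A.1.orderEmbOfFin A.2) (ofLp c) 0), ?_, ?_⟩
  · calc _ ≤ Fintype.card {A : Finset (Fin m) // A.card = k} * F.card :=
          Finset.card_biUnion_le_card_mul _ _ _ fun _ _ ↦ Finset.card_image_le
      _ = m.choose k * F.card := by simp
  · rintro _ ⟨x, hx, rfl⟩
    rw [mem_closedBall_zero_iff] at hx
    obtain ⟨A, hA, hxA⟩ :=
      exists_card_eq_forall_notMem_norm_rpow_le hpq.ne_top hx (by simpa using hkm)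
    obtain ⟨c, hcF, hc⟩ := mem_iUnion₂.1 <| hF ⟨_, mem_closedBall_zero_iff.2
      ((norm_toLp_comp_le (A.orderEmbOfFin hA).injective x).trans hx), rfl⟩
    refine mem_iUnion₂.2 ⟨_, Finset.mem_biUnion.2 ⟨⟨A, hA⟩, Finset.mem_univ _,
      Finset.mem_image_of_mem _ hcF⟩, ?_⟩
    rw [mem_closedBall, dist_eq_norm] at hc ⊢
    exact norm_diagonal_sub_toLp_extend_le hpq.le hpq.ne_top hTm hTk hx hA hxA hc

end Diagonal

/-- The key iteration step in the proof of Theorem 3.2: there is a positive integer `C₆`,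
depending only on `p` and `q`, such that for all `2 ≤ n ≤ m ≤ 2ⁿ`, every `T₀ : X → Y` and
every `s ≥ 1`,
`e_{C₆ n + s}(T(m)) ≤ 2^{1/q} max(e_s(T(k)), ‖T₀‖/(k+1)^α)`,
where `k` is the smallest positive integer with `k ≥ n/(2 log₂(2m/n))` and `T(j)` denotes
the diagonal operator `(x₁,…,x_j) ↦ (T₀ x₁, …, T₀ x_j) : ℓ_p^j(X) → ℓ_q^j(Y)`. -/
theorem entropy_diagonal_iteration_step (p q : ℝ≥0∞) [Fact (1 ≤ p)] [Fact (1 ≤ q)]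
    (hpq : p < q) :
    ∃ C₆ : ℕ, 0 < C₆ ∧
      ∀ (m n : ℕ) (hn : 2 ≤ n) (hnm : n ≤ m) (hm2 : m ≤ 2 ^ n) (k : ℕ),
        (1 ≤ k ∧ (n : ℝ) / (2 * Real.logb 2 (2 * m / n)) ≤ (k : ℝ) ∧
          (∀ j : ℕ, 1 ≤ j → (n : ℝ) / (2 * Real.logb 2 (2 * m / n)) ≤ (j : ℝ) → k ≤ j)) →
        ∀ (X Y : Type) [NormedAddCommGroup X] [NormedSpace ℝ X]
          [NormedAddCommGroup Y] [NormedSpace ℝ Y]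
          (T0 : X →L[ℝ] Y)
          (Tm : PiLp p (fun _ : Fin m => X) →L[ℝ] PiLp q (fun _ : Fin m => Y))
          (Tk : PiLp p (fun _ : Fin k => X) →L[ℝ] PiLp q (fun _ : Fin k => Y)),
          (∀ x i, Tm x i = T0 (x i)) → (∀ x i, Tk x i = T0 (x i)) →
          ∀ s : ℕ, 1 ≤ s →
            entropyNum (C₆ * n + s) Tm ≤
              (2 : ℝ) ^ (1 / q.toReal) *
                max (entropyNum s Tk)
                  (‖T0‖ / ((k : ℝ) + 1) ^ (1 / p.toReal - 1 / q.toReal)) := by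
  refine ⟨5, by norm_num, ?_⟩
  rintro m n hn hnm hm2 k ⟨-, hk_ge, hk_min⟩ X Y _ _ _ _ T0 Tm Tk hTm hTk s hs
  obtain ⟨hkn, hchoose⟩ := choose_le_two_pow_of_minimal hn hnm hm2 hk_ge hk_min
  refine entropyNum_le_mul_max_of_forall_cover (by positivity) fun ε hε F hF hcov ↦ ?_
  obtain ⟨G, hG, hGcov⟩ := exists_finset_cover_diagonal hpq (hkn.trans hnm) hTm hTk hcov
  refine entropyNum_le_of_cover (by positivity) G ?_ hGcov
  calc G.card ≤ m.choose k * F.card := hG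
    _ ≤ 2 ^ (5 * n) * 2 ^ (s - 1) := Nat.mul_le_mul hchoose hF
    _ = 2 ^ (5 * n + s - 1) := by rw [← pow_add]; congr 1; omega
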